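/- If G₁ and G₂ are connected nontrivial graphs and G₁ contains an odd cycle (i.e., G₁ is not bipartite), then the Kronecker product G₁ × G₂ is connected. -/

import Mathlib

open SimpleGraph

/-- The Kronecker (tensor) product of two simple graphs. -/
def tensorProd {α β : Type*} (G : SimpleGraph α) (H : SimpleGraph β) : SimpleGraph (α × β) where
  Adj p q := G.Adj p.1 q.1 ∧ H.Adj p.2 q.2
  symm := ⟨fun p q h => ⟨h.1.symm, h.2.symm⟩⟩
  loopless := ⟨fun p h => G.loopless.irrefl p.1 h.1⟩

instance {α β : Type*} (G : SimpleGraph α) (H : SimpleGraph β)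
    [DecidableRel G.Adj] [DecidableRel H.Adj] : DecidableRel (tensorProd G H).Adj :=
  fun _ _ => instDecidableAnd

/-- `S` is a separating set of `G`: deleting `S` leaves a single vertex or a
disconnected (possibly empty) graph. -/
def IsSeparating {V : Type*} (G : SimpleGraph V) (S : Set V) : Prop :=
  Sᶜ.ncard = 1 ∨ ¬ (G.induce Sᶜ).Connected

/-- The vertex connectivity `κ(G)`: the minimum cardinality of a separating set. -/
noncomputable def kappa {V : Type*} [Fintype V] (G : SimpleGraph V) : ℕ :=
  sInf {k | ∃ S : Set V, IsSeparating G S ∧ S.ncard = k}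

/-- A graph is super-connected (super-κ) if every minimum separating set is the
neighborhood of some vertex. -/
def SuperK {V : Type*} [Fintype V] (G : SimpleGraph V) : Prop :=
  ∀ S : Set V, IsSeparating G S → S.ncard = kappa G → ∃ v, S = G.neighborSet v

/-!
Walks of equal length in `G₁` and `G₂` zip to a walk in `G₁ × G₂`. Since neither graph has
isolated vertices, a walk can be lengthened by any even amount (step back and forth), so two
walks of equal length parity can be padded to the same length. An odd closed walk of `G₁`
spliced into a walk from `a` to `c` flips its parity, so between `(a, b)` and `(c, d)` we can
always match the parity of any walk from `b` to `d`.
-/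

namespace SimpleGraph

variable {V : Type*} {G : SimpleGraph V}

lemma Preconnected.exists_adj_of_ne_bot (hG : G.Preconnected) (hne : G ≠ ⊥) (v : V) :
    ∃ w, G.Adj v w := by
  obtain ⟨a, b, hab⟩ := ne_bot_iff_exists_adj.1 hne
  have : Nontrivial V := nontrivial_of_ne a b hab.ne
  exact hG.exists_adj_of_nontrivial v

lemma ne_bot_of_not_colorable_two (hG : ¬G.Colorable 2) : G ≠ ⊥ :=
  fun h => hG ((colorable_one_iff.2 h).mono one_le_two)

lemma Walk.exists_length_eq_add_two_mul (hG : ∀ v, ∃ w, G.Adj v w) {u v : V}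
    (p : G.Walk u v) (k : ℕ) : ∃ q : G.Walk u v, q.length = p.length + 2 * k := by
  induction k with
  | zero => exact ⟨p, rfl⟩
  | succ k ih =>
    obtain ⟨q, hq⟩ := ih
    obtain ⟨w, hw⟩ := hG v
    refine ⟨q.append (.cons hw (.cons hw.symm .nil)), ?_⟩
    simp only [Walk.length_append, Walk.length_cons, Walk.length_nil]
    omega

lemma Preconnected.exists_walk_length_mod_two_eq (hG : G.Preconnected) (hodd : ¬G.Colorable 2)
    (u v : V) (n : ℕ) : ∃ p : G.Walk u v, p.length % 2 = n % 2 := by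
  obtain ⟨x, c, hc⟩ : ∃ x, ∃ c : G.Walk x x, Odd c.length := by
    simpa [two_colorable_iff_forall_loop_even] using hodd
  obtain ⟨p⟩ := hG u v
  obtain ⟨r⟩ := hG u x
  by_cases hp : p.length % 2 = n % 2
  · exact ⟨p, hp⟩
  · refine ⟨r.append (c.append (r.reverse.append p)), ?_⟩
    simp only [Walk.length_append, Walk.length_reverse]
    rw [Nat.odd_iff] at hc
    omega

end SimpleGraph

section tensorProd

variable {α β : Type*} {G : SimpleGraph α} {H : SimpleGraph β}

lemma tensorProd_reachable_of_length_eq {a c : α} {b d : β} (p : G.Walk a c) (q : H.Walk b d)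
    (hpq : p.length = q.length) : (tensorProd G H).Reachable (a, b) (c, d) := by
  induction p generalizing b with
  | nil =>
    cases q with
    | nil => rfl
    | cons _ _ => simp at hpq
  | @cons a a' c hadj p ih =>
    cases q with
    | nil => simp at hpq
    | @cons b b' d hadj' q =>
      have hstep : (tensorProd G H).Adj (a, b) (a', b') := ⟨hadj, hadj'⟩
      exact hstep.reachable.trans (ih q (by simpa using hpq))

lemma tensorProd_reachable_of_length_mod_two_eq (hG : ∀ v, ∃ w, G.Adj v w)
    (hH : ∀ v, ∃ w, H.Adj v w) {a c : α} {b d : β} (p : G.Walk a c) (q : H.Walk b d)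
    (hpq : p.length % 2 = q.length % 2) : (tensorProd G H).Reachable (a, b) (c, d) := by
  obtain ⟨p', hp'⟩ := p.exists_length_eq_add_two_mul hG ((q.length - p.length) / 2)
  obtain ⟨q', hq'⟩ := q.exists_length_eq_add_two_mul hH ((p.length - q.length) / 2)
  exact tensorProd_reachable_of_length_eq p' q' (by omega)

end tensorProd

theorem stmt4_general {α β : Type*}
    (G₁ : SimpleGraph α) (G₂ : SimpleGraph β)
    (h₁ : G₁.Connected) (h₂ : G₂.Connected)
    (he₂ : G₂.edgeSet.Nonempty)
    (hodd : ¬ G₁.Colorable 2) :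
    (tensorProd G₁ G₂).Connected := by
  have := h₁.nonempty
  have := h₂.nonempty
  have hadj₁ := h₁.preconnected.exists_adj_of_ne_bot (ne_bot_of_not_colorable_two hodd)
  have hadj₂ := h₂.preconnected.exists_adj_of_ne_bot (edgeSet_nonempty.1 he₂)
  refine .mk fun ⟨a, b⟩ ⟨c, d⟩ => ?_
  obtain ⟨q⟩ := h₂ b d
  obtain ⟨p, hp⟩ := h₁.preconnected.exists_walk_length_mod_two_eq hodd a c q.length
  exact tensorProd_reachable_of_length_mod_two_eq hadj₁ hadj₂ p q hp

theorem stmt4 {α β : Type*} [Fintype α] [Fintype β]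
    (G₁ : SimpleGraph α) (G₂ : SimpleGraph β)
    (h₁ : G₁.Connected) (h₂ : G₂.Connected)
    (he₁ : G₁.edgeSet.Nonempty) (he₂ : G₂.edgeSet.Nonempty)
    (hodd : ¬ G₁.Colorable 2) :
    (tensorProd G₁ G₂).Connected :=
  stmt4_general G₁ G₂ h₁ h₂ he₂ hodd
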